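/- Let N ≥ d_t = dim(P_t(S^d)), and suppose X_N = {x_1,...,x_N} ⊂ S^d is a fundamental system for P_t(S^d). Then C_t(X_N) = 0 if and only if X_N is a spherical t-design, where C_t(X_N) = E G_t(X_N) e with G_t = Y_t^T Y_t the Gram matrix of the spherical harmonics evaluation matrix, E = [e, −I_{N−1}] ∈ R^{(N−1)×N}, and e = (1,...,1)^T ∈ R^N. -/

import Mathlib

open MeasureTheory Finset Matrix

noncomputable section

/-- Euclidean space `ℝ^{d+1}`. -/
abbrev Esp (d : ℕ) := EuclideanSpace ℝ (Fin (d + 1))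

/-- The unit sphere `S^d ⊂ ℝ^{d+1}`. -/
abbrev Sd (d : ℕ) := Metric.sphere (0 : Esp d) 1

/-- The surface measure on `S^d`. -/
def sphMeasure (d : ℕ) : Measure (Sd d) := (volume : Measure (Esp d)).toSphere

/-- The surface area `ω_d` of `S^d`. -/
def omega (d : ℕ) : ℝ := (sphMeasure d Set.univ).toReal

/-- `f : S^d → ℝ` is the restriction of a polynomial of degree at most `t`. -/
def IsPt (d t : ℕ) (f : Sd d → ℝ) : Prop :=
  ∃ P : MvPolynomial (Fin (d + 1)) ℝ, P.totalDegree ≤ t ∧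
    ∀ x : Sd d, f x = MvPolynomial.eval (fun i => (x : Esp d) i) P

/-- `X` is a spherical `t`-design. -/
def IsDesign (d t N : ℕ) (X : Fin N → Sd d) : Prop :=
  ∀ f : Sd d → ℝ, IsPt d t f →
    (∑ j, f (X j)) / (N : ℝ) = (∫ x, f x ∂(sphMeasure d)) / omega d

/-- `M(d,ℓ)`, the dimension of the space of degree-`ℓ` spherical harmonics on `S^d`. -/
def Mdim (d ℓ : ℕ) : ℕ := (2 * ℓ + d - 1) * Nat.factorial (ℓ + d - 2) /
    (Nat.factorial (d - 1) * Nat.factorial ℓ)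

/-- `X` is a fundamental system for `P_t(S^d)`. -/
def IsFundamental (d t N : ℕ) (X : Fin N → Sd d) : Prop :=
  ∀ f : Sd d → ℝ, IsPt d t f → (∀ j, f (X j) = 0) → ∀ x, f x = 0

/-- The hypotheses that `Y ℓ k`, `k < M(d,ℓ)`, `ℓ ≤ t`, form an orthonormal basis of real
spherical harmonics for `P_t(S^d)`, with `Y 0 0` the constant `1/√ω_d`. -/
structure IsONBHarmonics (d t : ℕ) (Y : ℕ → ℕ → Sd d → ℝ) : Prop where
  poly : ∀ ℓ ≤ t, ∀ k < Mdim d ℓ, IsPt d ℓ (Y ℓ k)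
  ortho : ∀ ℓ ≤ t, ∀ ℓ' ≤ t, ∀ k < Mdim d ℓ, ∀ k' < Mdim d ℓ',
    ∫ x, Y ℓ k x * Y ℓ' k' x ∂(sphMeasure d) = if ℓ = ℓ' ∧ k = k' then 1 else 0
  span : ∀ f : Sd d → ℝ, IsPt d t f → ∃ c : ℕ → ℕ → ℝ,
    ∀ x, f x = ∑ ℓ ∈ range (t + 1), ∑ k ∈ range (Mdim d ℓ), c ℓ k * Y ℓ k x
  const : ∀ x, Y 0 0 x = 1 / Real.sqrt (omega d)

/-- Row index set for the matrix `Y_t`: pairs `(ℓ, k)` with `ℓ ≤ t`, `k < M(d,ℓ)`. -/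
abbrev HIdx (d t : ℕ) := (ℓ : Fin (t + 1)) × Fin (Mdim d ℓ.1)

/-- The spherical harmonic evaluation matrix `Y_t ∈ ℝ^{d_t × N}`. -/
def Ymat (d t N : ℕ) (Y : ℕ → ℕ → Sd d → ℝ) (X : Fin N → Sd d) :
    Matrix (HIdx d t) (Fin N) ℝ :=
  fun p j => Y p.1.1 p.2.1 (X j)

/-- The Gram matrix `G_t = Y_tᵀ Y_t`. -/
def Gmat (d t N : ℕ) (Y : ℕ → ℕ → Sd d → ℝ) (X : Fin N → Sd d) :
    Matrix (Fin N) (Fin N) ℝ :=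
  (Ymat d t N Y X)ᵀ * Ymat d t N Y X

/-- The vector `C_t(X_N) ∈ ℝ^{N-1}`, `(C_t)_i = (G_t e)_1 - (G_t e)_{i+1}`. -/
def Cvec (d t N : ℕ) (Y : ℕ → ℕ → Sd d → ℝ) (X : Fin N → Sd d) :
    Fin (N - 1) → ℝ :=
  fun i =>
    (Gmat d t N Y X).mulVec (fun _ => 1) ⟨0, by have := i.2; omega⟩ -
      (Gmat d t N Y X).mulVec (fun _ => 1) ⟨i.1 + 1, by have := i.2; omega⟩

/-! The row sums `r_{ℓk} = ∑_j Y_{ℓk}(x_j)` of `Y_t` are the coefficients of the polynomial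
`F = ∑_{ℓ,k} r_{ℓk} Y_{ℓk}`, and `G_t e` is the vector of values `F(x_i)`; so `C_t(X_N) = 0`
says that `F` is constant on `X_N`, hence (fundamental system) constant on `S^d`. By
orthonormality `F ≡ λ` iff `r_{ℓk} = λ ∫ Y_{ℓk}` for all `ℓ, k`, i.e. iff the equal-weight rule
`f ↦ ∑_j f(x_j)` equals `λ ∫ f` on the basis, hence on `P_t`; and that, for some `λ`, is the
definition of a `t`-design, with `λ = N / ω_d` forced by `f = 1`. -/

instance (d : ℕ) : Nonempty (Sd d) :=
  (NormedSpace.sphere_nonempty.mpr zero_le_one).to_subtype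

instance (d : ℕ) : IsFiniteMeasure (sphMeasure d) := by
  unfold sphMeasure; infer_instance

instance (d : ℕ) : (sphMeasure d).IsOpenPosMeasure := by
  unfold sphMeasure; infer_instance

lemma omega_pos (d : ℕ) : 0 < omega d :=
  measureReal_univ_pos

namespace IsPt

variable {d t : ℕ} {f g : Sd d → ℝ}

lemma const (c : ℝ) : IsPt d t fun _ => c :=
  ⟨MvPolynomial.C c, by simp, fun x => by simp⟩

lemma mono {t' : ℕ} (hf : IsPt d t f) (htt' : t ≤ t') : IsPt d t' f :=
  let ⟨P, hP, hPf⟩ := hf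
  ⟨P, hP.trans htt', hPf⟩

lemma add (hf : IsPt d t f) (hg : IsPt d t g) : IsPt d t fun x => f x + g x :=
  let ⟨P, hP, hPf⟩ := hf
  let ⟨Q, hQ, hQg⟩ := hg
  ⟨P + Q, (MvPolynomial.totalDegree_add P Q).trans (max_le hP hQ), fun x => by simp [hPf, hQg]⟩

lemma const_mul (hf : IsPt d t f) (c : ℝ) : IsPt d t fun x => c * f x :=
  let ⟨P, hP, hPf⟩ := hf
  ⟨MvPolynomial.C c * P, (MvPolynomial.totalDegree_mul _ _).trans (by simpa using hP),
    fun x => by simp [hPf]⟩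

lemma sub_const (hf : IsPt d t f) (c : ℝ) : IsPt d t fun x => f x - c := by
  simpa [sub_eq_add_neg] using hf.add (const (-c))

lemma sum {ι : Type*} (s : Finset ι) {F : ι → Sd d → ℝ} (hF : ∀ i ∈ s, IsPt d t (F i)) :
    IsPt d t fun x => ∑ i ∈ s, F i x := by
  classical
  induction s using Finset.induction with
  | empty => simpa using const 0
  | insert a s ha ih =>
    simpa [Finset.sum_insert ha] using
      (hF a (mem_insert_self a s)).add (ih fun i hi => hF i (mem_insert_of_mem hi))

lemma continuous (hf : IsPt d t f) : Continuous f := by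
  obtain ⟨P, -, hPf⟩ := hf
  rw [funext hPf]
  exact (MvPolynomial.continuous_eval P).comp
    (continuous_pi fun i => (EuclideanSpace.proj i).continuous.comp continuous_subtype_val)

end IsPt

lemma IsFundamental.pos {d t N : ℕ} {X : Fin N → Sd d} (hX : IsFundamental d t N X) :
    0 < N := by
  refine Nat.pos_of_ne_zero fun hN => ?_
  subst hN
  simpa using hX (fun _ => 1) (IsPt.const 1) Fin.elim0 (Classical.arbitrary _)

lemma IsFundamental.exists_eq_const_iff {d t N : ℕ} {X : Fin N → Sd d}
    (hX : IsFundamental d t N X) {f : Sd d → ℝ} (hf : IsPt d t f) :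
    (∃ c, ∀ x, f x = c) ↔ ∀ i j, f (X i) = f (X j) := by
  refine ⟨fun ⟨c, hc⟩ i j => by rw [hc, hc], fun h => ⟨f (X ⟨0, hX.pos⟩), fun x => ?_⟩⟩
  exact sub_eq_zero.mp (hX _ (hf.sub_const _) (fun j => sub_eq_zero.mpr (h _ _)) x)

lemma isDesign_iff_exists_sum_eq_mul_integral {d t N : ℕ} {X : Fin N → Sd d} (hN : 0 < N) :
    IsDesign d t N X ↔
      ∃ c : ℝ, ∀ f, IsPt d t f → ∑ j, f (X j) = c * ∫ x, f x ∂(sphMeasure d) := by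
  have hN' : (N : ℝ) ≠ 0 := by positivity
  have hω := (omega_pos d).ne'
  constructor
  · refine fun h => ⟨N / omega d, fun f hf => ?_⟩
    rw [div_mul_comm, ← h f hf, div_mul_cancel₀ _ hN']
  · rintro ⟨c, hc⟩ f hf
    have hNc : (N : ℝ) = c * omega d := by
      simpa [omega, Measure.real] using hc _ (IsPt.const 1)
    rw [hc f hf, hNc, mul_div_mul_left _ _ (left_ne_zero_of_mul (hNc ▸ hN'))]

def harmonicSum (d t : ℕ) (Y : ℕ → ℕ → Sd d → ℝ) (c : ℕ → ℕ → ℝ) (x : Sd d) : ℝ :=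
  ∑ ℓ ∈ range (t + 1), ∑ k ∈ range (Mdim d ℓ), c ℓ k * Y ℓ k x

lemma sum_harmonicSum {d t N : ℕ} (Y : ℕ → ℕ → Sd d → ℝ) (c : ℕ → ℕ → ℝ) (X : Fin N → Sd d) :
    ∑ j, harmonicSum d t Y c (X j) =
      ∑ ℓ ∈ range (t + 1), ∑ k ∈ range (Mdim d ℓ), c ℓ k * ∑ j, Y ℓ k (X j) := by
  simp only [harmonicSum, mul_sum]
  rw [sum_comm]
  exact sum_congr rfl fun ℓ _ => sum_comm

lemma Gmat_mulVec_one_apply (d t N : ℕ) (Y : ℕ → ℕ → Sd d → ℝ) (X : Fin N → Sd d)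
    (i : Fin N) :
    (Gmat d t N Y X *ᵥ fun _ => 1) i = harmonicSum d t Y (fun ℓ k => ∑ j, Y ℓ k (X j)) (X i) := by
  simp only [mulVec, dotProduct, Gmat, mul_apply, transpose_apply, Ymat, mul_one, harmonicSum]
  rw [sum_comm, ← univ_sigma_univ, sum_sigma, ← Fin.sum_univ_eq_sum_range]
  refine sum_congr rfl fun ℓ _ => ?_
  rw [← Fin.sum_univ_eq_sum_range (fun k => (∑ j, Y ℓ k (X j)) * Y ℓ k (X i))]
  simp only [mul_sum, mul_comm]

lemma forall_sub_succ_eq_zero_iff {N : ℕ} (v : Fin N → ℝ) :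
    (∀ i : Fin (N - 1), v ⟨0, by have := i.2; omega⟩ - v ⟨i + 1, by have := i.2; omega⟩ = 0) ↔
      ∀ i j, v i = v j := by
  refine ⟨fun h => ?_, fun h i => sub_eq_zero.mpr (h _ _)⟩
  have h0 : ∀ i : Fin N, v i = v ⟨0, i.pos⟩ := fun ⟨i, hi⟩ => by
    cases i with
    | zero => rfl
    | succ i => exact (sub_eq_zero.mp (h ⟨i, by omega⟩)).symm
  exact fun i j => (h0 i).trans (h0 j).symm

lemma Cvec_eq_zero_iff (d t N : ℕ) (Y : ℕ → ℕ → Sd d → ℝ) (X : Fin N → Sd d) :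
    Cvec d t N Y X = 0 ↔ ∀ i j,
      harmonicSum d t Y (fun ℓ k => ∑ j, Y ℓ k (X j)) (X i) =
        harmonicSum d t Y (fun ℓ k => ∑ j, Y ℓ k (X j)) (X j) := by
  rw [funext_iff]
  simp only [← Gmat_mulVec_one_apply]
  exact forall_sub_succ_eq_zero_iff _

namespace IsONBHarmonics

variable {d t : ℕ} {Y : ℕ → ℕ → Sd d → ℝ}

lemma continuous (hY : IsONBHarmonics d t Y) {ℓ k : ℕ} (hℓ : ℓ ∈ range (t + 1))
    (hk : k ∈ range (Mdim d ℓ)) : Continuous (Y ℓ k) :=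
  (hY.poly ℓ (Nat.lt_succ_iff.mp (mem_range.mp hℓ)) k (mem_range.mp hk)).continuous

lemma isPt_harmonicSum (hY : IsONBHarmonics d t Y) (c : ℕ → ℕ → ℝ) :
    IsPt d t (harmonicSum d t Y c) := by
  refine IsPt.sum _ fun ℓ hℓ => IsPt.sum _ fun k hk => IsPt.const_mul ?_ _
  have hℓt := Nat.lt_succ_iff.mp (mem_range.mp hℓ)
  exact (hY.poly ℓ hℓt k (mem_range.mp hk)).mono hℓt

lemma integral_harmonicSum_mul (hY : IsONBHarmonics d t Y) (c : ℕ → ℕ → ℝ) {g : Sd d → ℝ}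
    (hg : Continuous g) :
    ∫ x, harmonicSum d t Y c x * g x ∂(sphMeasure d) =
      ∑ ℓ ∈ range (t + 1), ∑ k ∈ range (Mdim d ℓ), c ℓ k * ∫ x, Y ℓ k x * g x ∂(sphMeasure d) := by
  have hint : ∀ ℓ ∈ range (t + 1), ∀ k ∈ range (Mdim d ℓ),
      Integrable (fun x => c ℓ k * (Y ℓ k x * g x)) (sphMeasure d) := fun ℓ hℓ k hk =>
    (((hY.continuous hℓ hk).mul hg).integrable_of_hasCompactSupport
      (HasCompactSupport.of_compactSpace _)).const_mul _
  simp only [harmonicSum, sum_mul, mul_assoc]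
  rw [integral_finsetSum _ fun ℓ hℓ => integrable_finsetSum _ (hint ℓ hℓ)]
  refine sum_congr rfl fun ℓ hℓ => ?_
  rw [integral_finsetSum _ (hint ℓ hℓ)]
  exact sum_congr rfl fun k _ => integral_const_mul _ _

lemma integral_harmonicSum_mul_self (hY : IsONBHarmonics d t Y) (c : ℕ → ℕ → ℝ) {ℓ k : ℕ}
    (hℓ : ℓ ≤ t) (hk : k < Mdim d ℓ) :
    ∫ x, harmonicSum d t Y c x * Y ℓ k x ∂(sphMeasure d) = c ℓ k := by
  have hℓ' : ℓ ∈ range (t + 1) := mem_range.mpr (Nat.lt_succ_of_le hℓ)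
  rw [hY.integral_harmonicSum_mul c (hY.continuous hℓ' (mem_range.mpr hk))]
  rw [sum_eq_single_of_mem ℓ hℓ', sum_eq_single_of_mem k (mem_range.mpr hk)]
  · simp [hY.ortho ℓ hℓ ℓ hℓ k hk k hk]
  · intro k' hk' hk'k
    simp [hY.ortho ℓ hℓ ℓ hℓ k' (mem_range.mp hk') k hk, hk'k]
  · intro ℓ' hℓ' hℓ'ℓ
    refine sum_eq_zero fun k' hk' => ?_
    simp [hY.ortho ℓ' (Nat.lt_succ_iff.mp (mem_range.mp hℓ')) ℓ hℓ k' (mem_range.mp hk') k hk,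
      hℓ'ℓ]

lemma harmonicSum_eq_const_iff (hY : IsONBHarmonics d t Y) (c : ℕ → ℕ → ℝ) (a : ℝ) :
    (∀ x, harmonicSum d t Y c x = a) ↔
      ∀ ℓ ≤ t, ∀ k < Mdim d ℓ, c ℓ k = a * ∫ x, Y ℓ k x ∂(sphMeasure d) := by
  constructor
  · intro h ℓ hℓ k hk
    rw [← hY.integral_harmonicSum_mul_self c hℓ hk, ← integral_const_mul]
    simp only [h]
  · intro h x
    obtain ⟨e, he⟩ := hY.span (fun _ => 1) (IsPt.const 1)
    have he' : ∀ ℓ ≤ t, ∀ k < Mdim d ℓ, ∫ x, Y ℓ k x ∂(sphMeasure d) = e ℓ k := fun ℓ hℓ k hk => by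
      simpa [harmonicSum, ← he] using hY.integral_harmonicSum_mul_self e hℓ hk
    calc harmonicSum d t Y c x = a * harmonicSum d t Y e x := by
          simp only [harmonicSum, mul_sum]
          refine sum_congr rfl fun ℓ hℓ => sum_congr rfl fun k hk => ?_
          have hℓt := Nat.lt_succ_iff.mp (mem_range.mp hℓ)
          rw [h ℓ hℓt k (mem_range.mp hk), he' ℓ hℓt k (mem_range.mp hk), mul_assoc]
      _ = a := by rw [harmonicSum, ← he, mul_one]

lemma sum_eq_mul_integral_iff (hY : IsONBHarmonics d t Y) {N : ℕ} (X : Fin N → Sd d) (a : ℝ) :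
    (∀ f, IsPt d t f → ∑ j, f (X j) = a * ∫ x, f x ∂(sphMeasure d)) ↔
      ∀ ℓ ≤ t, ∀ k < Mdim d ℓ, ∑ j, Y ℓ k (X j) = a * ∫ x, Y ℓ k x ∂(sphMeasure d) := by
  refine ⟨fun h ℓ hℓ k hk => h _ ((hY.poly ℓ hℓ k hk).mono hℓ), fun h f hf => ?_⟩
  obtain ⟨c, hc⟩ := hY.span f hf
  have hcf : f = harmonicSum d t Y c := funext hc
  have hint := hY.integral_harmonicSum_mul c continuous_const (g := fun _ => 1)
  simp only [mul_one] at hint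
  rw [hcf, sum_harmonicSum, hint, mul_sum]
  refine sum_congr rfl fun ℓ hℓ => ?_
  rw [mul_sum]
  refine sum_congr rfl fun k hk => ?_
  rw [h ℓ (Nat.lt_succ_iff.mp (mem_range.mp hℓ)) k (mem_range.mp hk)]
  ring

end IsONBHarmonics

theorem Cvec_eq_zero_iff_design_general (d t N : ℕ)
    (X : Fin N → Sd d) (Y : ℕ → ℕ → Sd d → ℝ) (hY : IsONBHarmonics d t Y)
    (hfund : IsFundamental d t N X) :
    Cvec d t N Y X = 0 ↔ IsDesign d t N X := by
  rw [Cvec_eq_zero_iff, isDesign_iff_exists_sum_eq_mul_integral hfund.pos,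
    ← hfund.exists_eq_const_iff (hY.isPt_harmonicSum _)]
  simp only [hY.sum_eq_mul_integral_iff, hY.harmonicSum_eq_const_iff]

/-- for a fundamental system `X` with `N ≥ dim P_t`, `C_t(X) = 0` iff
`X` is a spherical `t`-design. -/
theorem Cvec_eq_zero_iff_design (d t N : ℕ)
    (hN : ∑ ℓ ∈ range (t + 1), Mdim d ℓ ≤ N)
    (X : Fin N → Sd d) (Y : ℕ → ℕ → Sd d → ℝ) (hY : IsONBHarmonics d t Y)
    (hfund : IsFundamental d t N X) :
    Cvec d t N Y X = 0 ↔ IsDesign d t N X :=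
  Cvec_eq_zero_iff_design_general d t N X Y hY hfund
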